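/- Let H₁ = (V₁,E₁) be an undirected graph with terminals s and v and H₂ = (V₂,E₂) an undirected graph with terminals v and t, where V₁ ∩ V₂ = {v} and E₁ ∩ E₂ = ∅, and let G = (V₁ ∪ V₂, E₁ ∪ E₂) be their series composition. Let M ⊆ E₁ ∪ E₂ and k ≥ 0. Then S ⊆ E₁ ∪ E₂ is a feasible FTP solution for (G,s,t,M,k) if and only if S ∩ E₁ is a feasible FTP solution for (H₁,s,v,M∩E₁,k) and S ∩ E₂ is a feasible FTP solution for (H₂,v,t,M∩E₂,k). -/

import Mathlib

/-!
Since `v` is the only common vertex of the two halves, an `s`-`t` walk in `S` must pass through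
`v`; cutting out the excursions into `V₂` before its last visit to `v` leaves an `s`-`v` walk
using only edges of `E₁`, and the segment after that visit uses only edges of `E₂`. Hence a
failure set of one half that disconnects it also disconnects `s` from `t`. Conversely, for any
`F ⊆ M` the sets `F ∩ E₁` and `F ∩ E₂` are admissible failure sets of the two halves, and the two
surviving walks concatenate at `v`.
-/

/-- `uReach S a b`: the undirected graph with edge set `S` contains an `a`-`b` path. -/
def uReach {V : Type*} [DecidableEq V] (S : Finset (Sym2 V)) (a b : V) : Prop :=
  Relation.ReflTransGen (fun x y => Sym2.mk x y ∈ S) a b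

/-- Feasibility for undirected Fault-Tolerant Path: for every `F ⊆ M` with `|F| ≤ k`,
the graph `(V, S \ F)` contains an `s`-`t` path. -/
def ftpuFeasible {V : Type*} [DecidableEq V] (S M : Finset (Sym2 V)) (s t : V) (k : ℕ) : Prop :=
  ∀ F ⊆ M, F.card ≤ k → uReach (S \ F) s t

section

variable {V : Type*} [DecidableEq V]

theorem uReach_mono {W W' : Finset (Sym2 V)} (h : W ⊆ W') {a b : V} (hr : uReach W a b) :
    uReach W' a b :=
  Relation.ReflTransGen.mono (fun _ _ hxy => h hxy) _ _ hr

theorem uReach.trans {W : Finset (Sym2 V)} {a b c : V} (hab : uReach W a b)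
    (hbc : uReach W b c) : uReach W a c :=
  Relation.ReflTransGen.trans hab hbc

theorem uReach_cases_of_cutVertex {V₁ V₂ : Set V} {E₁ E₂ W : Finset (Sym2 V)} {v : V}
    (hcut : V₁ ∩ V₂ ⊆ {v}) (hE₁ : ∀ e ∈ E₁, ∀ x ∈ e, x ∈ V₁)
    (hE₂ : ∀ e ∈ E₂, ∀ x ∈ e, x ∈ V₂) (hW : W ⊆ E₁ ∪ E₂) {a b : V} (ha : a ∈ V₁)
    (h : uReach W a b) :
    (b ∈ V₁ ∧ uReach (W ∩ E₁) a b) ∨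
      (uReach (W ∩ E₁) a v ∧ b ∈ V₂ ∧ uReach (W ∩ E₂) v b) := by
  have eq_v : ∀ {x}, x ∈ V₁ → x ∈ V₂ → x = v := fun h₁ h₂ => hcut ⟨h₁, h₂⟩
  induction h with
  | refl => exact Or.inl ⟨ha, .refl⟩
  | @tail c b _ hcb ih =>
    rcases Finset.mem_union.mp (hW hcb) with hcb₁ | hcb₂
    · have hedge : s(c, b) ∈ W ∩ E₁ := Finset.mem_inter.mpr ⟨hcb, hcb₁⟩
      have hb : b ∈ V₁ := hE₁ _ hcb₁ b (Sym2.mem_mk_right c b)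
      rcases ih with ⟨_, hac⟩ | ⟨hav, hc₂, -⟩
      · exact Or.inl ⟨hb, hac.tail hedge⟩
      · obtain rfl := eq_v (hE₁ _ hcb₁ c (Sym2.mem_mk_left c b)) hc₂
        exact Or.inl ⟨hb, hav.tail hedge⟩
    · have hedge : s(c, b) ∈ W ∩ E₂ := Finset.mem_inter.mpr ⟨hcb, hcb₂⟩
      have hb : b ∈ V₂ := hE₂ _ hcb₂ b (Sym2.mem_mk_right c b)
      rcases ih with ⟨hc₁, hac⟩ | ⟨hav, -, hvc⟩
      · obtain rfl := eq_v hc₁ (hE₂ _ hcb₂ c (Sym2.mem_mk_left c b))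
        exact Or.inr ⟨hac, hb, .single hedge⟩
      · exact Or.inr ⟨hav, hb, hvc.tail hedge⟩

theorem uReach_inter_of_cutVertex {V₁ V₂ : Set V} {E₁ E₂ W : Finset (Sym2 V)} {v : V}
    (hcut : V₁ ∩ V₂ ⊆ {v}) (hE₁ : ∀ e ∈ E₁, ∀ x ∈ e, x ∈ V₁)
    (hE₂ : ∀ e ∈ E₂, ∀ x ∈ e, x ∈ V₂) (hW : W ⊆ E₁ ∪ E₂) {a b : V} (ha : a ∈ V₁)
    (hb : b ∈ V₂) (h : uReach W a b) :
    uReach (W ∩ E₁) a v ∧ uReach (W ∩ E₂) v b := by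
  rcases uReach_cases_of_cutVertex hcut hE₁ hE₂ hW ha h with ⟨hb₁, hab⟩ | ⟨hav, -, hvb⟩
  · obtain rfl : b = v := hcut ⟨hb₁, hb⟩
    exact ⟨hab, .refl⟩
  · exact ⟨hav, hvb⟩

theorem ftpuFeasible_inter_of_cutVertex {V₁ V₂ : Set V} {E₁ E₂ S M : Finset (Sym2 V)}
    {s v t : V} {k : ℕ} (hcut : V₁ ∩ V₂ ⊆ {v}) (hE₁ : ∀ e ∈ E₁, ∀ x ∈ e, x ∈ V₁)
    (hE₂ : ∀ e ∈ E₂, ∀ x ∈ e, x ∈ V₂) (hS : S ⊆ E₁ ∪ E₂) (hs : s ∈ V₁) (ht : t ∈ V₂)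
    (h : ftpuFeasible S M s t k) :
    ftpuFeasible (S ∩ E₁) (M ∩ E₁) s v k ∧ ftpuFeasible (S ∩ E₂) (M ∩ E₂) v t k := by
  have halves : ∀ F ⊆ M, F.card ≤ k →
      uReach ((S ∩ E₁) \ F) s v ∧ uReach ((S ∩ E₂) \ F) v t := by
    intro F hF hk
    simpa only [Finset.sdiff_inter_right_comm] using
      uReach_inter_of_cutVertex hcut hE₁ hE₂ (Finset.sdiff_subset.trans hS) hs ht (h F hF hk)
  exact ⟨fun F hF hk => (halves F (hF.trans Finset.inter_subset_left) hk).1,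
    fun F hF hk => (halves F (hF.trans Finset.inter_subset_left) hk).2⟩

theorem uReach_sdiff_of_ftpuFeasible_inter {E S M F : Finset (Sym2 V)} {a b : V} {k : ℕ}
    (h : ftpuFeasible (S ∩ E) (M ∩ E) a b k) (hF : F ⊆ M) (hk : F.card ≤ k) :
    uReach (S \ F) a b := by
  have hFE : (F ∩ E).card ≤ k := (Finset.card_le_card Finset.inter_subset_left).trans hk
  refine uReach_mono ?_ (h (F ∩ E) (Finset.inter_subset_inter_right hF) hFE)
  intro e he
  simp only [Finset.mem_sdiff, Finset.mem_inter] at he ⊢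
  tauto

theorem ftpuFeasible_of_inter {E₁ E₂ S M : Finset (Sym2 V)} {s v t : V} {k : ℕ}
    (h₁ : ftpuFeasible (S ∩ E₁) (M ∩ E₁) s v k) (h₂ : ftpuFeasible (S ∩ E₂) (M ∩ E₂) v t k) :
    ftpuFeasible S M s t k := fun _ hF hk =>
  (uReach_sdiff_of_ftpuFeasible_inter h₁ hF hk).trans
    (uReach_sdiff_of_ftpuFeasible_inter h₂ hF hk)

end

theorem stmt10_general {V : Type*} [DecidableEq V] (V₁ V₂ : Finset V) (E₁ E₂ : Finset (Sym2 V))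
    (s v t : V) (M S : Finset (Sym2 V)) (k : ℕ)
    (hV : V₁ ∩ V₂ = {v})
    (hE₁ : ∀ e ∈ E₁, ∀ x ∈ e, x ∈ V₁)
    (hE₂ : ∀ e ∈ E₂, ∀ x ∈ e, x ∈ V₂)
    (hs : s ∈ V₁) (ht : t ∈ V₂)
    (hS : S ⊆ E₁ ∪ E₂) :
    ftpuFeasible S M s t k ↔
      ftpuFeasible (S ∩ E₁) (M ∩ E₁) s v k ∧
      ftpuFeasible (S ∩ E₂) (M ∩ E₂) v t k := by
  have hcut : (V₁ : Set V) ∩ V₂ ⊆ {v} := by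
    rw [← Finset.coe_inter, hV, Finset.coe_singleton]
  exact ⟨ftpuFeasible_inter_of_cutVertex hcut hE₁ hE₂ hS hs ht,
    fun ⟨h₁, h₂⟩ => ftpuFeasible_of_inter h₁ h₂⟩

/-- Series composition: `H₁ = (V₁, E₁)` has terminals `s, v`, `H₂ = (V₂, E₂)` has
terminals `v, t`, with `V₁ ∩ V₂ = {v}` and `E₁ ∩ E₂ = ∅`. Then `S ⊆ E₁ ∪ E₂` is
feasible for FTP on the composed graph `(G, s, t, M, k)` iff `S ∩ E₁` is feasible for
`(H₁, s, v, M ∩ E₁, k)` and `S ∩ E₂` is feasible for `(H₂, v, t, M ∩ E₂, k)`. -/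
theorem stmt10 {V : Type*} [DecidableEq V] (V₁ V₂ : Finset V) (E₁ E₂ : Finset (Sym2 V))
    (s v t : V) (M S : Finset (Sym2 V)) (k : ℕ)
    (hV : V₁ ∩ V₂ = {v})
    (hE₁ : ∀ e ∈ E₁, ∀ x ∈ e, x ∈ V₁)
    (hE₂ : ∀ e ∈ E₂, ∀ x ∈ e, x ∈ V₂)
    (hE : E₁ ∩ E₂ = ∅)
    (hs : s ∈ V₁) (ht : t ∈ V₂)
    (hM : M ⊆ E₁ ∪ E₂) (hS : S ⊆ E₁ ∪ E₂) :
    ftpuFeasible S M s t k ↔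
      ftpuFeasible (S ∩ E₁) (M ∩ E₁) s v k ∧
      ftpuFeasible (S ∩ E₂) (M ∩ E₂) v t k :=
  stmt10_general V₁ V₂ E₁ E₂ s v t M S k hV hE₁ hE₂ hs ht hS
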